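/- Suppose a countable-state MDP with stochastic transition probabilities q, bounded costs, and compact action sets satisfying the Compactness Conditions also satisfies Assumption HT with state ℓ and constant K*. Let v̄ be the optimal β̄-discounted value of the HV-AG-transformed MDP. Then the constant w := v̄(ℓ) and the bounded function h(x) := μ(x)(v̄(x) − v̄(ℓ)) satisfy the average-cost optimality equation w + h(x) = min_{a∈A(x)} [c(x,a) + Σ_{y∈X} q(y|x,a) h(y)] for all x ∈ X. -/

import Mathlib

/-- Iterated application of a real matrix to a function: `iterR P f n = Pⁿ f`. -/
noncomputable def iterR {X : Type*} (P : X → X → ℝ) (f : X → ℝ) : ℕ → X → ℝ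
  | 0 => f
  | n + 1 => fun x => ∑' y, P x y * iterR P f n y

/-!
Multiplying the transformed optimality equation at `x` by `μ x` undoes the normalisation of
the HV-AG transformation. For each action, the weights `w(y) := β̄ μ(x) p̄(y|x,a)` equal
`q(y|x,a) μ(y)` off `ℓ`, and `w(ℓ)` is chosen so that they add up to `μ(x) - 1`. Hence
`μ(x) (c̄ + β̄ Σ p̄ v̄) - (μ(x) - 1) v̄(ℓ) = c + Σ_y w(y) (v̄(y) - v̄(ℓ))`, and as the summand at `ℓ`
vanishes, this is `c + Σ_y q(y|x,a) h(y)`. Since `t ↦ μ(x) t - (μ(x) - 1) v̄(ℓ)` is increasing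
and affine, it commutes with the infimum over the actions. When `β̄ = 0` we have `K* = 1`, so
`μ ≡ 1` and no mass leaves `ℓ`: the divisions by zero in `p̄` are then harmless.
-/

open Function Set

section Series

variable {X : Type*}

lemma summable_mul_of_abs_le {p f : X → ℝ} {B : ℝ} (hp0 : ∀ y, 0 ≤ p y) (hp : Summable p)
    (hf : ∀ y, |f y| ≤ B) : Summable fun y => p y * f y :=
  (hp.mul_right B).of_norm_bounded fun y => by
    rw [norm_mul, Real.norm_of_nonneg (hp0 y), Real.norm_eq_abs]
    exact mul_le_mul_of_nonneg_left (hf y) (hp0 y)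

lemma neg_le_tsum_mul_of_hasSum_one {p f : X → ℝ} {B : ℝ} (hp0 : ∀ y, 0 ≤ p y)
    (hp : HasSum p 1) (hf : ∀ y, |f y| ≤ B) : -B ≤ ∑' y, p y * f y :=
  calc -B = ∑' y, p y * -B := by rw [tsum_mul_right, hp.tsum_eq, one_mul]
    _ ≤ ∑' y, p y * f y :=
      (hp.summable.mul_right _).tsum_le_tsum
        (fun y => mul_le_mul_of_nonneg_left (neg_le_of_abs_le (hf y)) (hp0 y))
        (summable_mul_of_abs_le hp0 hp.summable hf)

lemma neg_le_tsum_mul_mul_sub {p μ v : X → ℝ} {K C : ℝ} (hp0 : ∀ y, 0 ≤ p y) (hp : HasSum p 1)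
    (hμ0 : ∀ y, 0 ≤ μ y) (hμK : ∀ y, μ y ≤ K) (hv : ∀ y, |v y| ≤ C) (y₀ : X) :
    -(K * (2 * C)) ≤ ∑' y, p y * (μ y * (v y - v y₀)) :=
  neg_le_tsum_mul_of_hasSum_one hp0 hp fun y => by
    rw [abs_mul, abs_of_nonneg (hμ0 y)]
    exact mul_le_mul (hμK y) ((abs_sub _ _).trans (by linarith [hv y, hv y₀]))
      (abs_nonneg _) ((hμ0 y₀).trans (hμK y₀))

variable [DecidableEq X] (ℓ : X)

lemma eq_zero_of_tsum_ite_nonpos {g : X → ℝ} (hg0 : ∀ y, 0 ≤ g y) (hg : Summable g)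
    (h : ∑' w, (if w = ℓ then 0 else g w) ≤ 0) : ∀ y ≠ ℓ, g y = 0 := by
  have hite0 : ∀ w, 0 ≤ if w = ℓ then 0 else g w := fun w => by split_ifs <;> simp [hg0]
  have hite : Summable fun w => if w = ℓ then 0 else g w :=
    (hg.update ℓ 0).congr fun w => update_apply ..
  intro y hy
  have := hite.le_tsum y fun w _ => hite0 w
  rw [if_neg hy] at this
  linarith [hg0 y]

lemma tsum_ite_mul_eq {g f : X → ℝ} (hg : Summable g) (hgf : Summable fun y => g y * f y)
    (s : ℝ) :
    ∑' y, (if y = ℓ then s - ∑' w, (if w = ℓ then 0 else g w) else g y) * f y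
      = s * f ℓ + ∑' y, g y * (f y - f ℓ) := by
  have hT : ∑' w, (if w = ℓ then 0 else g w) = ∑' w, g w - g ℓ := by
    simpa only [update_apply, zero_sub, neg_add_eq_sub] using (hg.hasSum.update ℓ 0).tsum_eq
  have hL := (hgf.hasSum.update ℓ ((s - ∑' w, g w + g ℓ) * f ℓ)).tsum_eq
  simp only [update_apply] at hL
  rw [show (fun y => (if y = ℓ then s - ∑' w, (if w = ℓ then 0 else g w) else g y) * f y)
      = fun y => if y = ℓ then (s - ∑' w, g w + g ℓ) * f ℓ else g y * f y from
    funext fun y => by split_ifs with h <;> simp [h, hT, sub_add]]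
  simp only [mul_sub, hL, hgf.tsum_sub (hg.mul_right (f ℓ)), tsum_mul_right]
  ring

end Series

section Kernel

variable {X A : Type*} [DecidableEq X]

noncomputable def hvagOffMass (q : X → A → X → ℝ) (μ : X → ℝ) (ℓ : X) (x : X) (a : A) : ℝ :=
  ∑' w, (if w = ℓ then 0 else q x a w * μ w)

/-- The kernel `p̄(·|x,a)` of the HV-AG transformed model; `none` is the absorbing state `x̄`. -/
noncomputable def hvagKernel (q : X → A → X → ℝ) (μ : X → ℝ) (ℓ : X) (β : ℝ) (x : X) (a : A) :
    Option X → ℝ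
  | none => 1 - (μ x - 1) / (β * μ x)
  | some y =>
    if y = ℓ then (μ x - 1 - hvagOffMass q μ ℓ x a) / (β * μ x) else q x a y * μ y / (β * μ x)

variable (q : X → A → X → ℝ) (μ : X → ℝ) (ℓ : X) {β : ℝ} (x : X) (a : A)

lemma hvag_numerators_eq_zero_of_discount_eq_zero {K : ℝ} (hK : 1 ≤ K)
    (hβl : (K - 1) / K ≤ β) (hμ1 : ∀ y, 1 ≤ μ y) (hμK : ∀ y, μ y ≤ K)
    (hq0 : ∀ y, 0 ≤ q x a y) (hq : Summable (q x a)) (hμ : 1 + hvagOffMass q μ ℓ x a ≤ μ x) :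
    β = 0 → μ x - 1 - hvagOffMass q μ ℓ x a = 0 ∧ ∀ y ≠ ℓ, q x a y * μ y = 0 := by
  rintro rfl
  have hK1 : K ≤ 1 := by linarith [(div_le_iff₀ (by linarith : (0 : ℝ) < K)).1 hβl]
  have hμx : μ x = 1 := le_antisymm ((hμK x).trans hK1) (hμ1 x)
  have hqμ0 : ∀ y, 0 ≤ q x a y * μ y := fun y => mul_nonneg (hq0 y) (zero_le_one.trans (hμ1 y))
  have hT : 0 ≤ hvagOffMass q μ ℓ x a := tsum_nonneg fun w => by split_ifs <;> simp [hqμ0]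
  refine ⟨by linarith, eq_zero_of_tsum_ite_nonpos ℓ hqμ0 ?_
    (show hvagOffMass q μ ℓ x a ≤ 0 by linarith)⟩
  exact summable_mul_of_abs_le hq0 hq fun y => by
    rw [abs_of_nonneg (zero_le_one.trans (hμ1 y))]; exact hμK y

/-- For `β = 0` every entry of `hvagKernel` is a junk quotient by zero; the hypothesis `hβ`
makes the identity hold anyway. -/
lemma mul_hvagKernel_some
    (hβ : β = 0 → μ x - 1 - hvagOffMass q μ ℓ x a = 0 ∧ ∀ y ≠ ℓ, q x a y * μ y = 0) (y : X) :
    β * hvagKernel q μ ℓ β x a (some y)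
      = (if y = ℓ then μ x - 1 - hvagOffMass q μ ℓ x a else q x a y * μ y) / μ x := by
  rcases eq_or_ne β 0 with h0 | h0
  · obtain ⟨hℓ, hoff⟩ := hβ h0
    by_cases hy : y = ℓ <;> simp [h0, hy, hℓ, hoff]
  · simp only [hvagKernel]
    split_ifs <;> rw [← mul_div_assoc, mul_div_mul_left _ _ h0]

lemma mul_tsum_hvagKernel_mul {v : Option X → ℝ} (hv0 : v none = 0)
    (hβ : β = 0 → μ x - 1 - hvagOffMass q μ ℓ x a = 0 ∧ ∀ y ≠ ℓ, q x a y * μ y = 0) :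
    β * ∑' z, hvagKernel q μ ℓ β x a z * v z
      = (∑' y, (if y = ℓ then μ x - 1 - hvagOffMass q μ ℓ x a else q x a y * μ y)
          * v (some y)) / μ x := by
  have hsupp : support (fun z => β * hvagKernel q μ ℓ β x a z * v z) ⊆ range some := by
    rintro (_ | y) hz
    · simp [hv0] at hz
    · exact mem_range_self y
  rw [← tsum_mul_left, ← (Option.some_injective X).tsum_eq (by simpa only [mul_assoc] using hsupp),
    ← tsum_div_const]
  simp only [← mul_assoc, mul_hvagKernel_some q μ ℓ x a hβ, div_mul_eq_mul_div]

lemma mul_hvagBellman_eq {K Cv c : ℝ} {v : Option X → ℝ} (hq0 : ∀ y, 0 ≤ q x a y)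
    (hq : Summable (q x a)) (hμ0 : ∀ y, 0 ≤ μ y) (hμK : ∀ y, μ y ≤ K) (hμx : μ x ≠ 0)
    (hvb : ∀ z, |v z| ≤ Cv) (hv0 : v none = 0)
    (hβ : β = 0 → μ x - 1 - hvagOffMass q μ ℓ x a = 0 ∧ ∀ y ≠ ℓ, q x a y * μ y = 0) :
    μ x * (c / μ x + β * ∑' z, hvagKernel q μ ℓ β x a z * v z)
      = c + (μ x - 1) * v (some ℓ) + ∑' y, q x a y * (μ y * (v (some y) - v (some ℓ))) := by
  have hqμ : Summable fun y => q x a y * μ y :=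
    summable_mul_of_abs_le hq0 hq fun y => by rw [abs_of_nonneg (hμ0 y)]; exact hμK y
  have hqμv : Summable fun y => q x a y * μ y * v (some y) :=
    summable_mul_of_abs_le (fun y => mul_nonneg (hq0 y) (hμ0 y)) hqμ fun y => hvb (some y)
  rw [mul_tsum_hvagKernel_mul q μ ℓ x a hv0 hβ, hvagOffMass, tsum_ite_mul_eq ℓ hqμ hqμv]
  simp only [mul_assoc]
  field_simp
  ring

end Kernel

theorem stmt14 {X A : Type*} [DecidableEq X] (ℓ : X)
    (Act : X → Set A) (hAct : ∀ x, (Act x).Nonempty)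
    (q : X → A → X → ℝ) (hq0 : ∀ x a y, 0 ≤ q x a y)
    (hqsto : ∀ x a, HasSum (q x a) 1)
    (c : X → A → ℝ) (Cc : ℝ) (hc : ∀ x a, |c x a| ≤ Cc)
    (K : ℝ) (hK : 1 ≤ K)
    (μ : X → ℝ) (hμ1 : ∀ x, 1 ≤ μ x) (hμK : ∀ x, μ x ≤ K)
    (hμ : ∀ x, ∀ a ∈ Act x, 1 + ∑' y, (if y = ℓ then 0 else q x a y * μ y) ≤ μ x)
    (β : ℝ) (hβl : (K - 1) / K ≤ β)
    (vbar : Option X → ℝ) (Cv : ℝ) (hvb : ∀ z, |vbar z| ≤ Cv) (hv0 : vbar none = 0)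
    (hveq : ∀ x : X, vbar (some x)
      = ⨅ a : Act x, (c x a / μ x + β * ∑' z : Option X,
          (match z with
            | some y =>
                if y = ℓ then
                  (μ x - 1 - ∑' w, (if w = ℓ then 0 else q x (a : A) w * μ w)) / (β * μ x)
                else q x (a : A) y * μ y / (β * μ x)
            | none => 1 - (μ x - 1) / (β * μ x)) * vbar z)) :
    ∀ x : X, vbar (some ℓ) + μ x * (vbar (some x) - vbar (some ℓ))
      = ⨅ a : Act x, (c x a
          + ∑' y : X, q x a y * (μ y * (vbar (some y) - vbar (some ℓ)))) := by
  intro x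
  set L := vbar (some ℓ)
  have hμx : 0 < μ x := one_pos.trans_le (hμ1 x)
  have hμ0 : ∀ y, 0 ≤ μ y := fun y => zero_le_one.trans (hμ1 y)
  have : Nonempty (Act x) := (hAct x).to_subtype
  set G := fun a : Act x => c x a + ∑' y, q x a y * (μ y * (vbar (some y) - L))
  have hF : ∀ a : Act x, c x a / μ x + β * ∑' z, hvagKernel q μ ℓ β x a z * vbar z
      = (μ x)⁻¹ * (G a + (μ x - 1) * L) := fun a => by
    rw [eq_inv_mul_iff_mul_eq₀ hμx.ne', mul_hvagBellman_eq q μ ℓ x a (hq0 x a)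
      (hqsto x a).summable hμ0 hμK hμx.ne' hvb hv0
      (hvag_numerators_eq_zero_of_discount_eq_zero q μ ℓ x a hK hβl hμ1 hμK (hq0 x a)
        (hqsto x a).summable (hμ x a a.2))]
    ring
  have hGbdd : BddBelow (range G) := ⟨-Cc - K * (2 * Cv), forall_mem_range.2 fun a => by
    linarith [neg_le_of_abs_le (hc x a),
      neg_le_tsum_mul_mul_sub (hq0 x a) (hqsto x a) hμ0 hμK (fun y => hvb (some y)) ℓ]⟩
  have hv : vbar (some x) = ⨅ a : Act x, (μ x)⁻¹ * (G a + (μ x - 1) * L) := by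
    refine (hveq x).trans (iInf_congr fun a => .trans ?_ (hF a))
    -- the `match` of the hypothesis only reduces to `hvagKernel` once `z` is split
    congr! 4 with z
    cases z <;> rfl
  rw [hv, ← Real.mul_iInf_of_nonneg (inv_nonneg.2 hμx.le), ← ciInf_add hGbdd]
  field_simp
  ring
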